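/- Infinitely-often-conflicted run construction: Under the assumptions of the one-step conflict preservation lemma, if the empty prefix is conflicted (δ_p(ε) ≠ δ_q(ε)), then there exists an infinite sequence σ : ℕ → {pq, qp, pqp} (hence an admissible DLL pattern with no silent rounds) such that every finite prefix of σ is conflicted. Consequently, at least one of the two decision sequences r ↦ δ_p(σ|_r), r ↦ δ_q(σ|_r) fails to stabilize to a common value: there is no value v and round s with δ_p(σ|_r) = δ_q(σ|_r) = v for all r ≥ s. -/
import Mathlib


/-- The four possible round graphs in the Delayed Lossy-Link model. -/
inductive DLLGraph : Type
  | pq | qp | pqp | silent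
deriving DecidableEq

open DLLGraph in
/-- Infinitely-often-conflicted run construction: for a patient protocol
satisfying the DLL indistinguishability relations whose empty prefix is
conflicted, there is an admissible silence-free DLL pattern each of whose
prefixes is conflicted; consequently the two decision sequences never
stabilize to a common value. -/
theorem stmt_9 (O : Type*) (δp δq : List DLLGraph → O)
    -- indistinguishability relations (using patience)
    (h1 : ∀ π : List DLLGraph, δp (π ++ [pq]) = δp π)
    (h2 : ∀ π : List DLLGraph, δq (π ++ [pq]) = δq (π ++ [pqp]))
    (h3 : ∀ π : List DLLGraph, δp (π ++ [pqp]) = δp (π ++ [qp]))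
    (h4 : ∀ π : List DLLGraph, δq (π ++ [qp]) = δq π)
    -- the empty prefix is conflicted
    (hconf : δp [] ≠ δq []) :
    ∃ σ : ℕ → DLLGraph,
      (∀ r, σ r ≠ silent) ∧
      (∀ r, δp ((List.range r).map σ) ≠ δq ((List.range r).map σ)) ∧
      ¬ ∃ (v : O) (s : ℕ), ∀ r ≥ s,
        δp ((List.range r).map σ) = v ∧ δq ((List.range r).map σ) = v := by
  classical
  have key : ∀ π : List DLLGraph, δp π ≠ δq π →
      ∃ g : DLLGraph, g ≠ silent ∧ δp (π ++ [g]) ≠ δq (π ++ [g]) := by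
    intro π h
    by_contra hc
    push_neg at hc
    have epq := hc pq (by simp)
    have eqp := hc qp (by simp)
    have epqp := hc pqp (by simp)
    exact h (((h1 π).symm.trans epq).trans (((h2 π).trans epqp.symm).trans
      ((h3 π).trans (eqp.trans (h4 π)))))
  let F : ℕ → {π : List DLLGraph // δp π ≠ δq π} := fun n =>
    Nat.rec ⟨[], hconf⟩ (fun _ p => ⟨p.1 ++ [Classical.choose (key p.1 p.2)],
      (Classical.choose_spec (key p.1 p.2)).2⟩) n
  refine ⟨fun n => Classical.choose (key (F n).1 (F n).2), ?_, ?_, ?_⟩ <;>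
    [skip; skip; skip]
  · intro r
    exact (Classical.choose_spec (key (F r).1 (F r).2)).1
  · have hpre : ∀ r, (List.range r).map
        (fun n => Classical.choose (key (F n).1 (F n).2)) = (F r).1 := by
      intro r
      induction r with
      | zero => rfl
      | succ r ih =>
        rw [List.range_succ, List.map_append, ih]
        rfl
    intro r
    rw [hpre r]
    exact (F r).2
  · rintro ⟨v, s, hv⟩
    have hpre : ∀ r, (List.range r).map
        (fun n => Classical.choose (key (F n).1 (F n).2)) = (F r).1 := by
      intro r
      induction r with
      | zero => rfl
      | succ r ih =>
        rw [List.range_succ, List.map_append, ih]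
        rfl
    have := hv s le_rfl
    rw [hpre s] at this
    exact (F s).2 (this.1.trans this.2.symm)
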